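/- Let γ: ℝ → [0,∞] be measurable, symmetric (γ(−s) = γ(s)) and locally integrable, and set Γ_t = 2∫₀ᵗ γ(s) ds. Let μ be a Borel measure on ℝ satisfying Dalang's condition ∫_ℝ 1/(1+ξ²) μ(dξ) < ∞. For n ≥ 1 and t > 0 define I_n(t) = ∫_{0<t₁<⋯<t_n<t} ∏_{j=1}^{n} ( ∫_ℝ S(t_{j+1} − t_j, ξ) μ(dξ) ) dt₁⋯dt_n with the convention t_{n+1} = t, and I₀(t) = 1. Then for every integer k ≥ 0 and every t > 0, the series ∑_{n ≥ 0} n^k Γ_tⁿ I_n(t) converges. (This yields the summability ∑_{n≥0} (n^k/n!) α_n(t) < ∞ of the paper's Lemma 3.2, since α_n(t) ≤ Γ_tⁿ n! I_n(t).) -/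

import Mathlib

/-!
Since `S(u, ξ) ≤ (1 + u²) / (1 + ξ²)`, Dalang's condition bounds every factor of the integrand
of `I_n(t)` by `C = (1 + t²) ∫ (1 + ξ²)⁻¹ dμ`, and the simplex has volume `tⁿ / n!`, so
`|I_n(t)| ≤ (C t)ⁿ / n!`. The series is then dominated by `∑ nᵏ xⁿ / n!`, which converges for
every `x`.
-/

open MeasureTheory
open scoped ENNReal BigOperators

/-- `S(u,ξ) = sin²(uξ)/ξ²` for `ξ ≠ 0`, `S(u,0) = u²`. -/
noncomputable def waveS (u ξ : ℝ) : ℝ :=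
  if ξ = 0 then u ^ 2 else Real.sin (u * ξ) ^ 2 / ξ ^ 2

/-- The open simplex `{0 < t₁ < ⋯ < t_n < t}` in `ℝⁿ`. -/
def simplex (n : ℕ) (t : ℝ) : Set (Fin n → ℝ) :=
  {u | (∀ i, 0 < u i ∧ u i < t) ∧ ∀ i j : Fin n, i < j → u i < u j}

/-- `t_{j+1}`, with the convention `t_{n+1} = t`. -/
noncomputable def nextVal {n : ℕ} (t : ℝ) (u : Fin n → ℝ) (j : Fin n) : ℝ :=
  if h : (j : ℕ) + 1 < n then u ⟨(j : ℕ) + 1, h⟩ else t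

open scoped Nat

lemma waveS_le (u ξ : ℝ) : waveS u ξ ≤ (1 + u ^ 2) / (1 + ξ ^ 2) := by
  unfold waveS
  split_ifs with hξ
  · simp [hξ]
  · have hsin : Real.sin (u * ξ) ^ 2 ≤ (u * ξ) ^ 2 := Real.sin_sq_le_sq
    have hsin_one : Real.sin (u * ξ) ^ 2 ≤ 1 := Real.sin_sq_le_one _
    rw [div_le_div_iff₀ (by positivity) (by positivity)]
    nlinarith

lemma lintegral_waveS_le (μ : Measure ℝ) (u : ℝ) :
    ∫⁻ ξ, ENNReal.ofReal (waveS u ξ) ∂μ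
      ≤ ENNReal.ofReal (1 + u ^ 2) * ∫⁻ ξ, ENNReal.ofReal (1 / (1 + ξ ^ 2)) ∂μ := by
  rw [← lintegral_const_mul' _ _ ENNReal.ofReal_ne_top]
  refine lintegral_mono fun ξ => ?_
  rw [← ENNReal.ofReal_mul (by positivity), mul_one_div]
  exact ENNReal.ofReal_le_ofReal (waveS_le u ξ)

lemma toReal_lintegral_waveS_le {μ : Measure ℝ}
    (hDalang : ∫⁻ ξ, ENNReal.ofReal (1 / (1 + ξ ^ 2)) ∂μ ≠ ⊤) {u t : ℝ} (hu₀ : 0 ≤ u)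
    (hut : u ≤ t) :
    (∫⁻ ξ, ENNReal.ofReal (waveS u ξ) ∂μ).toReal
      ≤ (1 + t ^ 2) * (∫⁻ ξ, ENNReal.ofReal (1 / (1 + ξ ^ 2)) ∂μ).toReal := by
  calc (∫⁻ ξ, ENNReal.ofReal (waveS u ξ) ∂μ).toReal
      ≤ (ENNReal.ofReal (1 + u ^ 2) * ∫⁻ ξ, ENNReal.ofReal (1 / (1 + ξ ^ 2)) ∂μ).toReal :=
        ENNReal.toReal_mono (ENNReal.mul_ne_top ENNReal.ofReal_ne_top hDalang)
          (lintegral_waveS_le μ u)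
    _ = (1 + u ^ 2) * (∫⁻ ξ, ENNReal.ofReal (1 / (1 + ξ ^ 2)) ∂μ).toReal := by
        rw [ENNReal.toReal_mul, ENNReal.toReal_ofReal (by positivity)]
    _ ≤ (1 + t ^ 2) * (∫⁻ ξ, ENNReal.ofReal (1 / (1 + ξ ^ 2)) ∂μ).toReal := by
        gcongr

lemma strictMono_of_mem_simplex {n : ℕ} {t : ℝ} {u : Fin n → ℝ} (hu : u ∈ simplex n t) :
    StrictMono u :=
  fun i j hij => hu.2 i j hij

lemma sub_nextVal_mem_Ioc {n : ℕ} {t : ℝ} {u : Fin n → ℝ} (hu : u ∈ simplex n t) (j : Fin n) :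
    nextVal t u j - u j ∈ Set.Ioc 0 t := by
  have huj := hu.1 j
  unfold nextVal
  split_ifs with hj
  · have hnext := hu.1 ⟨j + 1, hj⟩
    have hlt := strictMono_of_mem_simplex hu (show j < ⟨j + 1, hj⟩ from Fin.lt_def.2 (by simp))
    constructor <;> linarith
  · constructor <;> linarith

lemma measurableSet_simplex (n : ℕ) (t : ℝ) : MeasurableSet (simplex n t) := by
  have hsimplex : simplex n t = (⋂ i, (fun u : Fin n → ℝ => u i) ⁻¹' Set.Ioo 0 t) ∩
      ⋂ i, ⋂ j, ⋂ (_ : i < j), {u : Fin n → ℝ | u i < u j} := by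
    ext u
    simp [simplex]
  rw [hsimplex]
  exact (MeasurableSet.iInter fun i => measurableSet_Ioo.preimage (measurable_pi_apply i)).inter
    (.iInter fun i => .iInter fun j => .iInter fun _ =>
      measurableSet_lt (measurable_pi_apply i) (measurable_pi_apply j))

-- The `n!` relabellings `u ∘ σ` of the simplex are disjoint and lie in the cube `(0, t)ⁿ`.
lemma volume_simplex_le (n : ℕ) (t : ℝ) :
    volume (simplex n t) ≤ ENNReal.ofReal t ^ n / n ! := by
  let E (σ : Equiv.Perm (Fin n)) : Set (Fin n → ℝ) :=
    MeasurableEquiv.arrowCongr' σ (.refl ℝ) ⁻¹' simplex n t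
  have hE (σ : Equiv.Perm (Fin n)) (x : Fin n → ℝ) : x ∈ E σ ↔ x ∘ σ.symm ∈ simplex n t :=
    Iff.rfl
  have hvolume (σ : Equiv.Perm (Fin n)) : volume (E σ) = volume (simplex n t) :=
    (volume_preserving_arrowCongr' σ _ (.id volume)).measure_preimage
      (measurableSet_simplex n t).nullMeasurableSet
  have hdisjoint : Pairwise (Function.onFun Disjoint E) := by
    intro σ τ hστ
    refine Set.disjoint_left.2 fun x hxσ hxτ => hστ ?_
    have hmonoσ := strictMono_of_mem_simplex ((hE σ x).1 hxσ)
    have hmonoτ := strictMono_of_mem_simplex ((hE τ x).1 hxτ)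
    have hcomp : x ∘ σ.symm = x ∘ τ.symm :=
      (hmonoσ.range_inj hmonoτ).1 (by simp only [EquivLike.range_comp])
    have hx : Function.Injective x := by
      simpa [Function.comp_assoc] using hmonoσ.injective.comp σ.injective
    exact Equiv.symm_bijective.injective (Equiv.ext fun i => hx (congrFun hcomp i))
  have hcube (σ : Equiv.Perm (Fin n)) : E σ ⊆ Set.univ.pi fun _ => Set.Ioo 0 t := by
    intro x hx i _
    simpa using ((hE σ x).1 hx).1 (σ i)
  have hsum : (n ! : ℝ≥0∞) * volume (simplex n t) ≤ ENNReal.ofReal t ^ n :=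
    calc (n ! : ℝ≥0∞) * volume (simplex n t) = ∑ σ, volume (E σ) := by
          simp [hvolume, Fintype.card_perm]
      _ = volume (⋃ σ, E σ) := by
          rw [measure_iUnion hdisjoint fun σ =>
            (measurableSet_simplex n t).preimage (MeasurableEquiv.measurable _), tsum_fintype]
      _ ≤ volume (Set.univ.pi fun _ : Fin n => Set.Ioo 0 t) :=
          measure_mono (Set.iUnion_subset hcube)
      _ = ENNReal.ofReal t ^ n := by simp [volume_pi_pi, Real.volume_Ioo]
  rwa [ENNReal.le_div_iff_mul_le (by simp [Nat.factorial_ne_zero]) (by simp), mul_comm]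

lemma volume_simplex_lt_top (n : ℕ) (t : ℝ) : volume (simplex n t) < ⊤ :=
  (volume_simplex_le n t).trans_lt
    (ENNReal.div_lt_top (by simp) (by simp [Nat.factorial_ne_zero]))

lemma measureReal_simplex_le (n : ℕ) (t : ℝ) :
    volume.real (simplex n t) ≤ max t 0 ^ n / n ! := by
  calc volume.real (simplex n t) ≤ (ENNReal.ofReal t ^ n / n !).toReal :=
        ENNReal.toReal_mono (ENNReal.div_ne_top (by simp) (by simp [Nat.factorial_ne_zero]))
          (volume_simplex_le n t)
    _ = max t 0 ^ n / n ! := by simp [ENNReal.toReal_ofReal']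

lemma summable_pow_mul_pow_div_factorial (k : ℕ) (x : ℝ) :
    Summable fun n : ℕ => (n : ℝ) ^ k * x ^ n / n ! := by
  have hgeom : Summable fun n : ℕ => (n : ℝ) ^ k * (1 / 2 : ℝ) ^ n :=
    summable_pow_mul_geometric_of_norm_lt_one k (by norm_num)
  have hsmall : ∀ᶠ n : ℕ in Filter.atTop, |2 * x| ^ n / n ! ≤ 1 :=
    ((Real.summable_pow_div_factorial |2 * x|).tendsto_atTop_zero.eventually_le_const
      zero_lt_one)
  refine hgeom.of_norm_bounded_eventually_nat ?_
  filter_upwards [hsmall] with n hn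
  have hhalf : (1 / 2 : ℝ) * |2 * x| = |x| := by rw [abs_mul, abs_two]; ring
  calc ‖(n : ℝ) ^ k * x ^ n / (n ! : ℝ)‖ = (n : ℝ) ^ k * |x| ^ n / n ! := by simp
    _ = (n : ℝ) ^ k * (1 / 2) ^ n * (|2 * x| ^ n / n !) := by rw [← hhalf, mul_pow]; ring
    _ ≤ (n : ℝ) ^ k * (1 / 2) ^ n := mul_le_of_le_one_right (by positivity) hn

lemma norm_prod_toReal_lintegral_waveS_le {μ : Measure ℝ}
    (hDalang : ∫⁻ ξ, ENNReal.ofReal (1 / (1 + ξ ^ 2)) ∂μ ≠ ⊤) {n : ℕ} {t : ℝ}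
    {u : Fin n → ℝ} (hu : u ∈ simplex n t) :
    ‖∏ j, (∫⁻ ξ, ENNReal.ofReal (waveS (nextVal t u j - u j) ξ) ∂μ).toReal‖
      ≤ ((1 + t ^ 2) * (∫⁻ ξ, ENNReal.ofReal (1 / (1 + ξ ^ 2)) ∂μ).toReal) ^ n := by
  rw [Real.norm_eq_abs, abs_of_nonneg (Finset.prod_nonneg fun _ _ => ENNReal.toReal_nonneg)]
  calc ∏ j, (∫⁻ ξ, ENNReal.ofReal (waveS (nextVal t u j - u j) ξ) ∂μ).toReal
      ≤ ∏ _j : Fin n, (1 + t ^ 2) * (∫⁻ ξ, ENNReal.ofReal (1 / (1 + ξ ^ 2)) ∂μ).toReal := by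
        refine Finset.prod_le_prod (fun _ _ => ENNReal.toReal_nonneg) fun j _ => ?_
        obtain ⟨hpos, hle⟩ := sub_nextVal_mem_Ioc hu j
        exact toReal_lintegral_waveS_le hDalang hpos.le hle
    _ = ((1 + t ^ 2) * (∫⁻ ξ, ENNReal.ofReal (1 / (1 + ξ ^ 2)) ∂μ).toReal) ^ n := by simp

lemma norm_setIntegral_simplex_le {μ : Measure ℝ}
    (hDalang : ∫⁻ ξ, ENNReal.ofReal (1 / (1 + ξ ^ 2)) ∂μ ≠ ⊤) (n : ℕ) (t : ℝ) :
    ‖∫ u in simplex n t,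
        ∏ j, (∫⁻ ξ, ENNReal.ofReal (waveS (nextVal t u j - u j) ξ) ∂μ).toReal‖
      ≤ ((1 + t ^ 2) * (∫⁻ ξ, ENNReal.ofReal (1 / (1 + ξ ^ 2)) ∂μ).toReal) ^ n
        * (max t 0 ^ n / n !) := by
  refine (norm_setIntegral_le_of_norm_le_const (volume_simplex_lt_top n t)
    fun u hu => norm_prod_toReal_lintegral_waveS_le hDalang hu).trans ?_
  gcongr
  exact measureReal_simplex_le n t

theorem stmt7_general
    (μ : Measure ℝ) (hDalang : ∫⁻ ξ, ENNReal.ofReal (1 / (1 + ξ ^ 2)) ∂μ < ⊤)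
    (t : ℝ) (k : ℕ) (Γt : ℝ) (I : ℕ → ℝ)
    (hI : ∀ n : ℕ, 1 ≤ n → I n = ∫ u in simplex n t,
      ∏ j : Fin n, (∫⁻ ξ, ENNReal.ofReal (waveS (nextVal t u j - u j) ξ) ∂μ).toReal) :
    Summable (fun n : ℕ => (n : ℝ) ^ k * Γt ^ n * I n) := by
  have hIn : ∀ n, 1 ≤ n → ‖I n‖ ≤
      ((1 + t ^ 2) * (∫⁻ ξ, ENNReal.ofReal (1 / (1 + ξ ^ 2)) ∂μ).toReal) ^ n
        * (max t 0 ^ n / n !) :=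
    fun n hn => hI n hn ▸ norm_setIntegral_simplex_le hDalang.ne n t
  generalize (1 + t ^ 2) * (∫⁻ ξ, ENNReal.ofReal (1 / (1 + ξ ^ 2)) ∂μ).toReal = C at hIn
  refine .of_norm_bounded_eventually_nat
    (summable_pow_mul_pow_div_factorial k (|Γt| * C * max t 0)) ?_
  filter_upwards [Filter.eventually_ge_atTop 1] with n hn
  calc ‖(n : ℝ) ^ k * Γt ^ n * I n‖ = (n : ℝ) ^ k * |Γt| ^ n * ‖I n‖ := by simp
    _ ≤ (n : ℝ) ^ k * |Γt| ^ n * (C ^ n * (max t 0 ^ n / n !)) := by gcongr; exact hIn n hn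
    _ = (n : ℝ) ^ k * (|Γt| * C * max t 0) ^ n / n ! := by ring

theorem stmt7 (γ : ℝ → ℝ≥0∞) (hγm : Measurable γ) (hγs : ∀ s : ℝ, γ (-s) = γ s)
    (hγloc : ∀ K : Set ℝ, IsCompact K → ∫⁻ s in K, γ s < ⊤)
    (μ : Measure ℝ) (hDalang : ∫⁻ ξ, ENNReal.ofReal (1 / (1 + ξ ^ 2)) ∂μ < ⊤)
    (t : ℝ) (ht : 0 < t) (k : ℕ)
    (Γt : ℝ) (hΓt : Γt = 2 * (∫⁻ s in Set.Ioc (0 : ℝ) t, γ s).toReal)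
    (I : ℕ → ℝ) (hI0 : I 0 = 1)
    (hI : ∀ n : ℕ, 1 ≤ n → I n = ∫ u in simplex n t,
      ∏ j : Fin n, (∫⁻ ξ, ENNReal.ofReal (waveS (nextVal t u j - u j) ξ) ∂μ).toReal) :
    Summable (fun n : ℕ => (n : ℝ) ^ k * Γt ^ n * I n) :=
  stmt7_general μ hDalang t k Γt I hI
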